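/- Let l, m₁, ρ be real numbers with l > 0, m₁ > 0, ρ > 0. For b ∈ (0, l) let g_b(λ) = sin(λl)/λ − (m₁/ρ)·sin(λb)·sin(λ(l−b)) and let Λ(b) = sInf {λ : ℝ | λ > 0 ∧ g_b(λ) = 0} be the first eigenvalue of the continuous-discrete problem with the load at position b. Then Λ(l/2) ≤ Λ(b) for every b ∈ (0, l); i.e., the first eigenvalue is smallest when the single discrete mass is located in the middle of the integration interval. -/

import Mathlib

/-!
For every `λ > 0` the load term satisfies `sin (λ b) sin (λ (l - b)) ≤ sin² (λ l / 2)`, so the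
characteristic function for the load at the midpoint lies below the one for the load at `b`.
Both functions tend to `l > 0` as `λ → 0⁺`, so at any positive root `λ` of `g_b` the function
`g_{l/2}` is `≤ 0` and, by the intermediate value theorem, has a root in `(0, λ]`. Since `g_b` has
a root at all (already `g_b (π / l) ≤ 0`), this gives `Λ (l / 2) ≤ Λ b`.
-/

open Real Set Filter Topology

theorem Real.sin_mul_sin_le_sin_sq_half_add (x y : ℝ) : sin x * sin y ≤ sin ((x + y) / 2) ^ 2 := by
  obtain ⟨u, v, rfl, rfl⟩ : ∃ u v, x = u + v ∧ y = u - v :=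
    ⟨(x + y) / 2, (x - y) / 2, by ring, by ring⟩
  have hsum : sin (u + v) * sin (u - v) = sin u ^ 2 - sin v ^ 2 := by
    rw [sin_add, sin_sub]
    linear_combination (sin u ^ 2) * sin_sq_add_cos_sq v - (sin v ^ 2) * sin_sq_add_cos_sq u
  rw [show (u + v + (u - v)) / 2 = u by ring, hsum]
  nlinarith [sq_nonneg (sin v)]

theorem Real.sin_mul_div_eq_mul_sinc (l : ℝ) {μ : ℝ} (hμ : μ ≠ 0) :
    sin (μ * l) / μ = l * sinc (μ * l) := by
  rcases eq_or_ne l 0 with rfl | hl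
  · simp
  · rw [sinc_of_ne_zero (mul_ne_zero hμ hl)]
    field_simp

theorem Real.tendsto_sin_mul_div_nhdsNE (l : ℝ) :
    Tendsto (fun μ ↦ sin (μ * l) / μ) (𝓝[≠] 0) (𝓝 l) := by
  have hcont : Tendsto (fun μ ↦ l * sinc (μ * l)) (𝓝 0) (𝓝 (l * sinc (0 * l))) :=
    (continuous_const.mul (continuous_sinc.comp (continuous_mul_const l))).tendsto 0
  rw [zero_mul, sinc_zero, mul_one] at hcont
  refine (hcont.mono_left nhdsWithin_le_nhds).congr' ?_
  filter_upwards [self_mem_nhdsWithin] with μ hμ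
  exact (sin_mul_div_eq_mul_sinc l hμ).symm

theorem exists_mem_Ioc_eq_zero_of_tendsto_nhdsGT {f : ℝ → ℝ} {L a : ℝ}
    (hf : ContinuousOn f (Ioi 0)) (hlim : Tendsto f (𝓝[>] 0) (𝓝 L)) (hL : 0 < L)
    (ha : 0 < a) (hfa : f a ≤ 0) : ∃ x ∈ Ioc 0 a, f x = 0 := by
  obtain ⟨μ, hfμ, hμ⟩ :=
    ((hlim.eventually (eventually_gt_nhds hL)).and (Ioo_mem_nhdsGT ha)).exists
  obtain ⟨x, hx, hfx⟩ := intermediate_value_Icc' hμ.2.le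
    (hf.mono fun y hy ↦ hμ.1.trans_le hy.1) ⟨hfa, hfμ.le⟩
  exact ⟨x, ⟨hμ.1.trans_le hx.1, hx.2⟩, hfx⟩

theorem sInf_posRoots_le_of_le {f g : ℝ → ℝ} {L : ℝ}
    (hf : ContinuousOn f (Ioi 0)) (hlim : Tendsto f (𝓝[>] 0) (𝓝 L)) (hL : 0 < L)
    (hfg : ∀ x, 0 < x → f x ≤ g x) (hg : {x | 0 < x ∧ g x = 0}.Nonempty) :
    sInf {x | 0 < x ∧ f x = 0} ≤ sInf {x | 0 < x ∧ g x = 0} := by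
  refine le_csInf hg fun a ⟨ha, hga⟩ ↦ ?_
  obtain ⟨x, hx, hfx⟩ :=
    exists_mem_Ioc_eq_zero_of_tendsto_nhdsGT hf hlim hL ha (hga ▸ hfg a ha)
  have hbdd : BddBelow {x | 0 < x ∧ f x = 0} := ⟨0, fun y hy ↦ hy.1.le⟩
  exact (csInf_le hbdd ⟨hx.1, hfx⟩).trans hx.2

/-- The characteristic function `g_b(μ)`, with `c` standing for `m₁ / ρ`. -/
noncomputable def cableCharFun (l c b μ : ℝ) : ℝ :=
  sin (μ * l) / μ - c * sin (μ * b) * sin (μ * (l - b))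

section cableCharFun

variable {l c b : ℝ}

theorem continuousOn_cableCharFun : ContinuousOn (cableCharFun l c b) {0}ᶜ := by
  unfold cableCharFun
  exact ((continuous_sin.comp (continuous_mul_const l)).continuousOn.div continuousOn_id
    fun μ hμ ↦ hμ).sub (by fun_prop)

theorem tendsto_cableCharFun_nhdsNE : Tendsto (cableCharFun l c b) (𝓝[≠] 0) (𝓝 l) := by
  have hload : Tendsto (fun μ ↦ c * sin (μ * b) * sin (μ * (l - b))) (𝓝[≠] 0) (𝓝 0) := by
    have : Continuous fun μ ↦ c * sin (μ * b) * sin (μ * (l - b)) := by fun_prop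
    simpa using (this.tendsto 0).mono_left nhdsWithin_le_nhds
  have h := (tendsto_sin_mul_div_nhdsNE l).sub hload
  rw [sub_zero] at h
  exact h

theorem cableCharFun_half_le (hc : 0 ≤ c) (μ : ℝ) :
    cableCharFun l c (l / 2) μ ≤ cableCharFun l c b μ := by
  have hload := sin_mul_sin_le_sin_sq_half_add (μ * b) (μ * (l - b))
  have hhalf : (μ * b + μ * (l - b)) / 2 = μ * (l / 2) := by ring
  rw [hhalf] at hload
  unfold cableCharFun
  rw [show l - l / 2 = l / 2 by ring, mul_assoc c, mul_assoc c, ← sq]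
  linarith [mul_le_mul_of_nonneg_left hload hc]

theorem cableCharFun_pi_div_nonpos (hc : 0 ≤ c) (hl : 0 < l) (hb : b ∈ Icc 0 l) :
    cableCharFun l c b (π / l) ≤ 0 := by
  have hsin : ∀ x ∈ Icc 0 l, 0 ≤ sin (π / l * x) := fun x hx ↦
    sin_nonneg_of_nonneg_of_le_pi (by positivity [hx.1])
      (by rw [div_mul_eq_mul_div, div_le_iff₀ hl]; nlinarith [pi_pos, hx.2])
  have hload := mul_nonneg (mul_nonneg hc (hsin b hb))
    (hsin (l - b) ⟨by linarith [hb.2], by linarith [hb.1]⟩)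
  unfold cableCharFun
  rw [div_mul_cancel₀ π hl.ne', sin_pi, zero_div]
  linarith

end cableCharFun

theorem middle_mass_minimizes_first_eigenvalue_general
    (l m₁ ρ : ℝ) (hm : 0 < m₁) (hρ : 0 < ρ)
    (Λ : ℝ → ℝ)
    (hΛ : ∀ b : ℝ, Λ b = sInf {lam : ℝ | lam > 0 ∧
      Real.sin (lam * l) / lam
        - (m₁ / ρ) * Real.sin (lam * b) * Real.sin (lam * (l - b)) = 0}) :
    ∀ b ∈ Ioo (0 : ℝ) l, Λ (l / 2) ≤ Λ b := by
  intro b hb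
  have hl : 0 < l := hb.1.trans hb.2
  have hc : 0 ≤ m₁ / ρ := div_nonneg hm.le hρ.le
  have hcont (b' : ℝ) : ContinuousOn (cableCharFun l (m₁ / ρ) b') (Ioi 0) :=
    continuousOn_cableCharFun.mono fun μ hμ ↦ ne_of_gt hμ
  have hlim (b' : ℝ) : Tendsto (cableCharFun l (m₁ / ρ) b') (𝓝[>] 0) (𝓝 l) :=
    tendsto_cableCharFun_nhdsNE.mono_left (nhdsWithin_mono 0 fun μ hμ ↦ ne_of_gt hμ)
  obtain ⟨a, ha, hga⟩ := exists_mem_Ioc_eq_zero_of_tendsto_nhdsGT (hcont b) (hlim b) hl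
    (div_pos pi_pos hl) (cableCharFun_pi_div_nonpos hc hl (Ioo_subset_Icc_self hb))
  rw [hΛ, hΛ]
  exact sInf_posRoots_le_of_le (hcont (l / 2)) (hlim (l / 2)) hl
    (fun μ _ ↦ cableCharFun_half_le hc μ) ⟨a, ha.1, hga⟩

/-- The first eigenvalue of the cable with one discrete load is smallest
when the load is located in the middle of the integration interval. -/
theorem middle_mass_minimizes_first_eigenvalue
    (l m₁ ρ : ℝ) (hl : 0 < l) (hm : 0 < m₁) (hρ : 0 < ρ)
    (Λ : ℝ → ℝ)
    (hΛ : ∀ b : ℝ, Λ b = sInf {lam : ℝ | lam > 0 ∧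
      Real.sin (lam * l) / lam
        - (m₁ / ρ) * Real.sin (lam * b) * Real.sin (lam * (l - b)) = 0}) :
    ∀ b ∈ Ioo (0 : ℝ) l, Λ (l / 2) ≤ Λ b :=
  middle_mass_minimizes_first_eigenvalue_general l m₁ ρ hm hρ Λ hΛ
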